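/- Let T(t) = max{0, t} (ReLU) and consider the posterior π(α, w | y, σ²) ∝ exp(−‖y − X θ(α,w)‖²/(2σ²) − αᵀα/2 − wᵀw/(2σ²τ_w²)) with θ_j = T(α_j − α₀)w_j. Fix j and let r_j = y − Σ_{k≠j} X_k T(α_k − α₀) w_k − X_j T(α_j − α₀) w_j + X_j T(α_j − α₀) w_j computed with the j-th term removed (i.e., the partial residual). Then the conditional distribution of α_j given (α_{(−j)}, w, y, σ²) is the two-component mixture κ·N_tr(0, 1; −∞, α₀) + (1−κ)·N_tr(ᾱ_j, σ̄_j²; α₀, ∞), where ᾱ_j = (r_j + X_j α₀ w_j)ᵀ X_j w_j / (X_jᵀX_j w_j² + σ²), σ̄_j² = σ²/(X_jᵀX_j w_j² + σ²), and κ = Φ(α₀) e^{−‖r_j‖²/(2σ²)} / [Φ(α₀) e^{−‖r_j‖²/(2σ²)} + (1 − Φ((α₀ − ᾱ_j)/σ̄_j)) σ̄_j e^{ᾱ_j²/(2σ̄_j²) − ‖r_j + X_j α₀ w_j‖²/(2σ²)}]. -/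

import Mathlib

/-
On the event `α_j < α₀` the ReLU switches the `j`-th variable off, so the unnormalized
conditional density is `√(2π) exp (-‖r_j‖² / 2σ²) φ(α_j)`. On `α₀ ≤ α_j` the residual is
`r̃_j - α_j w_j X_j` with `r̃_j = r_j + α₀ w_j X_j`, and completing the square in `α_j` turns the
density into `√(2π) σ̄_j exp (ᾱ_j² / 2σ̄_j² - ‖r̃_j‖² / 2σ²) · φ(α_j; ᾱ_j, σ̄_j²)`. Dividing each
piece by the mass of its truncated normal leaves the weights `A = Φ(α₀) exp (-‖r_j‖² / 2σ²)` and
`B = (1 - Φ((α₀ - ᾱ_j)/σ̄_j)) σ̄_j exp (…)`, hence the normalizing constant `√(2π) (A + B)` and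
`κ = A / (A + B)`.
-/

open MeasureTheory ProbabilityTheory Real
open scoped NNReal

noncomputable def stdNormalCDF (x : ℝ) : ℝ :=
  ∫ t in Set.Iic x, ProbabilityTheory.gaussianPDFReal 0 1 t

lemma setIntegral_gaussianPDFReal_pos (μ : ℝ) {v : ℝ≥0} (hv : v ≠ 0) {s : Set ℝ}
    (hs0 : volume s ≠ 0) : 0 < ∫ t in s, gaussianPDFReal μ v t := by
  have hsupp : Function.support (gaussianPDFReal μ v) = Set.univ :=
    Set.eq_univ_of_forall fun t => (gaussianPDFReal_pos μ v t hv).ne'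
  rw [setIntegral_pos_iff_support_of_nonneg_ae
    (ae_of_all _ fun t => gaussianPDFReal_nonneg μ v t)
    (integrable_gaussianPDFReal μ v).integrableOn, hsupp, Set.univ_inter]
  exact hs0.bot_lt

lemma stdNormalCDF_pos (x : ℝ) : 0 < stdNormalCDF x :=
  setIntegral_gaussianPDFReal_pos 0 one_ne_zero (s := Set.Iic x) (by simp)

lemma stdNormalCDF_lt_one (x : ℝ) : stdNormalCDF x < 1 := by
  have htail : 0 < ∫ t in Set.Ioi x, gaussianPDFReal 0 1 t :=
    setIntegral_gaussianPDFReal_pos 0 one_ne_zero (s := Set.Ioi x) (by simp)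
  have htotal : stdNormalCDF x + ∫ t in Set.Ioi x, gaussianPDFReal 0 1 t = 1 := by
    rw [stdNormalCDF, intervalIntegral.integral_Iic_add_Ioi
      (integrable_gaussianPDFReal 0 1).integrableOn (integrable_gaussianPDFReal 0 1).integrableOn]
    exact integral_gaussianPDFReal_eq_one 0 one_ne_zero
  linarith

lemma exp_neg_sq_div_eq_sqrt_mul_gaussianPDFReal (μ : ℝ) {v : ℝ≥0} (hv : v ≠ 0) (x : ℝ) :
    rexp (-(x - μ) ^ 2 / (2 * v)) = √(2 * π * v) * gaussianPDFReal μ v x := by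
  rw [gaussianPDFReal, mul_inv_cancel_left₀ (by positivity)]

lemma complete_square_exponent {R b q σ v m t : ℝ} (hσ : σ ≠ 0)
    (hv : v = q + σ ^ 2) (hv0 : v ≠ 0) (hm : m = b / v) :
    -(R - 2 * t * b + t ^ 2 * q) / (2 * σ ^ 2) - t ^ 2 / 2
      = (m ^ 2 / (2 * (σ ^ 2 / v)) - R / (2 * σ ^ 2)) + -(t - m) ^ 2 / (2 * (σ ^ 2 / v)) := by
  subst hm
  field_simp
  rw [hv]
  ring

section ReLUResidual

variable {E : Type*} [NormedAddCommGroup E] [InnerProductSpace ℝ E]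

lemma inner_self_mul_sq_add_sq_pos (X : E) (w : ℝ) {σ : ℝ} (hσ : σ ≠ 0) :
    0 < inner ℝ X X * w ^ 2 + σ ^ 2 :=
  add_pos_of_nonneg_of_pos (mul_nonneg real_inner_self_nonneg (sq_nonneg w)) (by positivity)

lemma exp_neg_norm_sub_smul_sq_eq_mul_gaussianPDFReal (r X : E) {w σ v m s : ℝ} (hσ : σ ≠ 0)
    (hv : v = inner ℝ X X * w ^ 2 + σ ^ 2) (hm : m = inner ℝ r X * w / v)
    (hs : s = √(σ ^ 2 / v)) (t : ℝ) :
    rexp (-‖r - (t * w) • X‖ ^ 2 / (2 * σ ^ 2) - t ^ 2 / 2)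
      = √(2 * π) * s * rexp (m ^ 2 / (2 * s ^ 2) - ‖r‖ ^ 2 / (2 * σ ^ 2))
        * gaussianPDFReal m (σ ^ 2 / v).toNNReal t := by
  have hv0 : 0 < v := hv ▸ inner_self_mul_sq_add_sq_pos X w hσ
  have hvar : ((σ ^ 2 / v).toNNReal : ℝ) = σ ^ 2 / v := Real.coe_toNNReal _ (by positivity)
  have hs2 : s ^ 2 = σ ^ 2 / v := by rw [hs, sq_sqrt (by positivity)]
  have hnorm : ‖r - (t * w) • X‖ ^ 2
      = ‖r‖ ^ 2 - 2 * t * (inner ℝ r X * w) + t ^ 2 * (inner ℝ X X * w ^ 2) := by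
    rw [norm_sub_sq_real, real_inner_smul_right, norm_smul, Real.norm_eq_abs, mul_pow, sq_abs,
      real_inner_self_eq_norm_sq]
    ring
  rw [hnorm, complete_square_exponent hσ (by rw [hv]) hv0.ne' hm, exp_add, ← hvar,
    exp_neg_sq_div_eq_sqrt_mul_gaussianPDFReal m (by simp; positivity), hvar, hs2,
    sqrt_mul (by positivity), ← hs]
  ring

lemma exp_neg_norm_sub_relu_smul_sq_of_lt (r X : E) (w σ : ℝ) {α₀ t : ℝ} (ht : t < α₀) :
    rexp (-‖r - (max 0 (t - α₀) * w) • X‖ ^ 2 / (2 * σ ^ 2) - t ^ 2 / 2)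
      = √(2 * π) * rexp (-‖r‖ ^ 2 / (2 * σ ^ 2)) * gaussianPDFReal 0 1 t := by
  have hpdf := exp_neg_sq_div_eq_sqrt_mul_gaussianPDFReal 0 one_ne_zero t
  simp only [sub_zero, NNReal.coe_one, mul_one] at hpdf
  rw [max_eq_left (by linarith), zero_mul, zero_smul, sub_zero, sub_eq_add_neg, exp_add,
    ← neg_div, hpdf]
  ring

lemma exp_neg_norm_sub_relu_smul_sq_of_le (r X : E) {w σ α₀ v m s t : ℝ} (hσ : σ ≠ 0)
    (hv : v = inner ℝ X X * w ^ 2 + σ ^ 2) (hm : m = inner ℝ (r + (α₀ * w) • X) X * w / v)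
    (hs : s = √(σ ^ 2 / v)) (ht : α₀ ≤ t) :
    rexp (-‖r - (max 0 (t - α₀) * w) • X‖ ^ 2 / (2 * σ ^ 2) - t ^ 2 / 2)
      = √(2 * π) * s * rexp (m ^ 2 / (2 * s ^ 2) - ‖r + (α₀ * w) • X‖ ^ 2 / (2 * σ ^ 2))
        * gaussianPDFReal m (σ ^ 2 / v).toNNReal t := by
  have hshift : r - (max 0 (t - α₀) * w) • X = (r + (α₀ * w) • X) - (t * w) • X := by
    rw [max_eq_right (by linarith), sub_mul, sub_smul]
    abel
  rw [hshift, exp_neg_norm_sub_smul_sq_eq_mul_gaussianPDFReal _ X hσ hv hm hs]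

end ReLUResidual

theorem stmt9_general (n : ℕ) (r Xj : EuclideanSpace ℝ (Fin n)) (wj σ α₀ : ℝ)
    (hσ : 0 < σ)
    (v : ℝ) (hv : v = (inner ℝ Xj Xj : ℝ) * wj ^ 2 + σ ^ 2)
    (abar : ℝ) (habar : abar = (inner ℝ (r + (α₀ * wj) • Xj) Xj : ℝ) * wj / v)
    (sbar : ℝ) (hsbar : sbar = Real.sqrt (σ ^ 2 / v))
    (κ : ℝ)
    (hκ : κ = stdNormalCDF α₀ * Real.exp (-‖r‖ ^ 2 / (2 * σ ^ 2))
        / (stdNormalCDF α₀ * Real.exp (-‖r‖ ^ 2 / (2 * σ ^ 2))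
          + (1 - stdNormalCDF ((α₀ - abar) / sbar)) * sbar
            * Real.exp (abar ^ 2 / (2 * sbar ^ 2)
                - ‖r + (α₀ * wj) • Xj‖ ^ 2 / (2 * σ ^ 2)))) :
    ∃ Z : ℝ, 0 < Z ∧ ∀ t : ℝ,
      Real.exp (-‖r - (max 0 (t - α₀) * wj) • Xj‖ ^ 2 / (2 * σ ^ 2) - t ^ 2 / 2)
        = Z * (κ * (if t < α₀ then gaussianPDFReal 0 1 t / stdNormalCDF α₀ else 0)
            + (1 - κ)
              * (if α₀ ≤ t then
                  gaussianPDFReal abar (Real.toNNReal (σ ^ 2 / v)) t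
                    / (1 - stdNormalCDF ((α₀ - abar) / sbar))
                else 0)) := by
  have hv0 : 0 < v := hv ▸ inner_self_mul_sq_add_sq_pos Xj wj hσ.ne'
  have hsbar0 : 0 < sbar := by rw [hsbar]; positivity
  have hΦ0 := stdNormalCDF_pos α₀
  have hΦc : 0 < 1 - stdNormalCDF ((α₀ - abar) / sbar) := sub_pos.2 (stdNormalCDF_lt_one _)
  set A := stdNormalCDF α₀ * rexp (-‖r‖ ^ 2 / (2 * σ ^ 2))
  set B := (1 - stdNormalCDF ((α₀ - abar) / sbar)) * sbar
    * rexp (abar ^ 2 / (2 * sbar ^ 2) - ‖r + (α₀ * wj) • Xj‖ ^ 2 / (2 * σ ^ 2))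
  have hAB : 0 < A + B := by positivity
  have hκA : (A + B) * κ = A := by rw [hκ]; field_simp
  have hκB : (A + B) * (1 - κ) = B := by rw [mul_sub, hκA]; ring
  refine ⟨√(2 * π) * (A + B), by positivity, fun t => ?_⟩
  rcases lt_or_ge t α₀ with ht | ht
  · rw [if_pos ht, if_neg ht.not_ge, exp_neg_norm_sub_relu_smul_sq_of_lt r Xj wj σ ht, mul_zero,
      add_zero, mul_assoc √(2 * π) (A + B), ← mul_assoc (A + B), hκA]
    simp only [A]
    field_simp
  · rw [if_neg ht.not_gt, if_pos ht,
      exp_neg_norm_sub_relu_smul_sq_of_le r Xj hσ.ne' hv habar hsbar ht, mul_zero, zero_add,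
      mul_assoc √(2 * π) (A + B), ← mul_assoc (A + B), hκB]
    simp only [B]
    field_simp

/-- With ReLU activation, the conditional (unnormalized) posterior density of
`α_j` given the rest is proportional to the two-component mixture
`κ·N_tr(0,1; −∞,α₀) + (1−κ)·N_tr(ᾱ_j, σ̄_j²; α₀, ∞)` with the stated `ᾱ_j, σ̄_j², κ`. -/
theorem stmt9 (n : ℕ) (r Xj : EuclideanSpace ℝ (Fin n)) (wj σ τw α₀ : ℝ)
    (hσ : 0 < σ) (hτ : 0 < τw)
    (v : ℝ) (hv : v = (inner ℝ Xj Xj : ℝ) * wj ^ 2 + σ ^ 2)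
    (abar : ℝ) (habar : abar = (inner ℝ (r + (α₀ * wj) • Xj) Xj : ℝ) * wj / v)
    (sbar : ℝ) (hsbar : sbar = Real.sqrt (σ ^ 2 / v))
    (κ : ℝ)
    (hκ : κ = stdNormalCDF α₀ * Real.exp (-‖r‖ ^ 2 / (2 * σ ^ 2))
        / (stdNormalCDF α₀ * Real.exp (-‖r‖ ^ 2 / (2 * σ ^ 2))
          + (1 - stdNormalCDF ((α₀ - abar) / sbar)) * sbar
            * Real.exp (abar ^ 2 / (2 * sbar ^ 2)
                - ‖r + (α₀ * wj) • Xj‖ ^ 2 / (2 * σ ^ 2)))) :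
    ∃ Z : ℝ, 0 < Z ∧ ∀ t : ℝ,
      Real.exp (-‖r - (max 0 (t - α₀) * wj) • Xj‖ ^ 2 / (2 * σ ^ 2) - t ^ 2 / 2)
        = Z * (κ * (if t < α₀ then gaussianPDFReal 0 1 t / stdNormalCDF α₀ else 0)
            + (1 - κ)
              * (if α₀ ≤ t then
                  gaussianPDFReal abar (Real.toNNReal (σ ^ 2 / v)) t
                    / (1 - stdNormalCDF ((α₀ - abar) / sbar))
                else 0)) :=
  stmt9_general n r Xj wj σ α₀ hσ v hv abar habar sbar hsbar κ hκ
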